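/- arXiv:2006.16681 — 2 statements merged into one kernel-verified Lean document; each statement's English description precedes it below -/
import Mathlib

section
/- Let Z ⊆ ℝ^m be nonempty, convex and compact, Δ = {p ∈ ℝ₊^m : Σ_{k=1}^m p^k = 1}, and ζ : Δ → 𝒫(Z) a correspondence with nonempty closed values that is weakly continuous from below (wcfb). Then the Browder–McCabe–Yannelis map Ψ(p) = {q ∈ Δ : q·z > 0 for all z ∈ ζ(p)} has the continuous inclusion property. -/
open Set

/-- A correspondence `ψ` is upper semi-continuous if `{e | ψ e ⊆ V}` is open for every
open `V`. -/
def USC {E X : Type*} [TopologicalSpace E] [TopologicalSpace X] (ψ : E → Set X) : Prop :=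
  ∀ V : Set X, IsOpen V → IsOpen {e | ψ e ⊆ V}

/-- The continuous inclusion property (He–Yannelis). -/
def ContinuousInclusionProperty {W X : Type*} [TopologicalSpace W]
    [AddCommGroup X] [Module ℝ X] [TopologicalSpace X] (Q : W → Set X) : Prop :=
  ∀ w : W, (Q w).Nonempty → ∃ U : Set W, IsOpen U ∧ w ∈ U ∧
    ∃ G : W → Set X,
      (∀ w', (G w').Nonempty ∧ Convex ℝ (G w') ∧ IsClosed (G w')) ∧
      USC G ∧ ∀ w' ∈ U, G w' ⊆ Q w'

/-- An open half-space of `ℝ^m`: `{z | ψ z > r}` for a nonzero linear form `ψ` and a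
real `r`. -/
def IsOpenHalfSpace {m : ℕ} (H : Set (Fin m → ℝ)) : Prop :=
  ∃ (q : Fin m → ℝ) (r : ℝ), q ≠ 0 ∧ H = {z | r < ∑ k, q k * z k}

/-- `P` is continuous from below (cfb) at `w`: for each open half-space `H` containing
the closure of `P w` there is an open neighborhood `U` of `w` such that for all `w' ∈ U`
and all `z' ∈ P w'` there exists `z ∈ H` with `z ≤ z'` coordinatewise. -/
def CFBAt {W : Type*} [TopologicalSpace W] {m : ℕ} (P : W → Set (Fin m → ℝ)) (w : W) :
    Prop :=
  ∀ H : Set (Fin m → ℝ), IsOpenHalfSpace H → closure (P w) ⊆ H →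
    ∃ U : Set W, IsOpen U ∧ w ∈ U ∧ ∀ w' ∈ U, ∀ z' ∈ P w', ∃ z ∈ H, ∀ k, z k ≤ z' k

/-- cfb at `w` for an `ℝ`-valued correspondence (used for coordinate projections). -/
def CFB1At {W : Type*} [TopologicalSpace W] (P : W → Set ℝ) (w : W) : Prop :=
  ∀ H : Set ℝ, (∃ q r : ℝ, q ≠ 0 ∧ H = {z | r < q * z}) → closure (P w) ⊆ H →
    ∃ U : Set W, IsOpen U ∧ w ∈ U ∧ ∀ w' ∈ U, ∀ z' ∈ P w', ∃ z ∈ H, z ≤ z'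

/-- `P` is weakly continuous from below (wcfb) at `w`: writing `x̲^k = min π^k P(w)`,
if `K = {k | x̲^k > 0}` is nonempty then some coordinate projection `π^k P` with `k ∈ K`
is cfb at `w`, and if `K = ∅` then `P` itself is cfb at `w`. -/
def WCFBAt {W : Type*} [TopologicalSpace W] {m : ℕ} (P : W → Set (Fin m → ℝ)) (w : W) :
    Prop :=
  ({k : Fin m | 0 < sInf ((fun z => z k) '' P w)}.Nonempty →
    ∃ k : Fin m, 0 < sInf ((fun z => z k) '' P w) ∧
      CFB1At (fun w' => (fun z => z k) '' P w') w) ∧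
  ({k : Fin m | 0 < sInf ((fun z => z k) '' P w)} = ∅ → CFBAt P w)

/-- The Browder–McCabe–Yannelis map. -/
def BMYMap {m : ℕ} (ζ : (stdSimplex ℝ (Fin m)) → Set (Fin m → ℝ)) :
    (stdSimplex ℝ (Fin m)) → Set (Fin m → ℝ) :=
  fun p => {q | q ∈ stdSimplex ℝ (Fin m) ∧ ∀ z ∈ ζ p, 0 < ∑ k, q k * z k}

/-- Proposition 8 (Khan–Uyanık): if the excess demand correspondence `ζ`, valued in a
nonempty convex compact `Z ⊆ ℝ^m`, has nonempty closed values and is weakly continuous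
from below, then the Browder–McCabe–Yannelis map has the continuous inclusion property. -/
theorem bmy_cip_of_wcfb {m : ℕ} (Z : Set (Fin m → ℝ))
    (hZne : Z.Nonempty) (hZconv : Convex ℝ Z) (hZcomp : IsCompact Z)
    (ζ : (stdSimplex ℝ (Fin m)) → Set (Fin m → ℝ)) (hζZ : ∀ p, ζ p ⊆ Z)
    (hval : ∀ p, (ζ p).Nonempty ∧ IsClosed (ζ p))
    (hwcfb : ∀ p, WCFBAt ζ p) :
    ContinuousInclusionProperty (BMYMap ζ) := by

  intro p hp
  obtain ⟨q, hqΔ, hq⟩ := hp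
  have hζc : ∀ w, IsCompact (ζ w) := fun w =>
    hZcomp.of_isClosed_subset (hval w).2 (hζZ w)
  by_cases hK : ({k : Fin m | 0 < sInf ((fun z => z k) '' ζ p)}.Nonempty)
  · obtain ⟨k, hkpos, hcfb⟩ := (hwcfb p).1 hK
    set ε := sInf ((fun z => z k) '' ζ p) with hε
    have hmem : ∀ z ∈ ζ p, ε ≤ z k := by
      intro z hz
      exact csInf_le ((hζc p).image (continuous_apply k)).bddBelow ⟨z, hz, rfl⟩
    have hH : closure ((fun z => z k) '' ζ p) ⊆ {x : ℝ | ε/2 < 1 * x} := by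
      have hcl : IsClosed ((fun z => z k) '' ζ p) :=
        ((hζc p).image (continuous_apply k)).isClosed
      rw [hcl.closure_eq]
      rintro x ⟨z, hz, rfl⟩
      have := hmem z hz
      simp only [Set.mem_setOf_eq, one_mul]
      linarith
    obtain ⟨U, hUopen, hpU, hU⟩ := hcfb _ ⟨1, ε/2, one_ne_zero, rfl⟩ hH
    set q₀ : Fin m → ℝ := fun j => if j = k then 1 else 0 with hq₀
    have hq₀Δ : q₀ ∈ stdSimplex ℝ (Fin m) := by
      constructor
      · intro j; simp only [hq₀]; split_ifs <;> norm_num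
      · simp [hq₀, Finset.sum_ite_eq']
    refine ⟨U, hUopen, hpU, fun _ => {q₀}, ?_, ?_, ?_⟩
    · intro w'; exact ⟨⟨q₀, rfl⟩, convex_singleton _, isClosed_singleton⟩
    · intro V hV
      by_cases h : q₀ ∈ V
      · convert isOpen_univ
        ext e; simp [Set.singleton_subset_iff, h]
      · convert isOpen_empty
        ext e; simp [Set.singleton_subset_iff, h]
    · intro w' hw' x hx
      rw [Set.mem_singleton_iff] at hx; rw [hx]
      refine ⟨hq₀Δ, fun z hz => ?_⟩
      obtain ⟨y, hy, hyz⟩ := hU w' hw' (z k) ⟨z, hz, rfl⟩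
      have hy' : ε/2 < y := by simpa using hy
      have hsum : ∑ j, q₀ j * z j = z k := by
        simp [hq₀, ite_mul, Finset.sum_ite_eq']
      rw [hsum]
      linarith
  · rw [Set.not_nonempty_iff_eq_empty] at hK
    have hcfb := (hwcfb p).2 hK
    have hcont : ContinuousOn (fun z : Fin m → ℝ => ∑ j, q j * z j) (ζ p) :=
      (continuous_finset_sum _ fun j _ =>
        continuous_const.mul (continuous_apply j)).continuousOn
    obtain ⟨z₀, hz₀, hmin⟩ := (hζc p).exists_isMinOn (hval p).1 hcont
    set ε := ∑ j, q j * z₀ j with hεdef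
    have hε : 0 < ε := hq z₀ hz₀
    have hqne : q ≠ 0 := by
      intro h
      have := hqΔ.2
      rw [h] at this
      simp at this
    have hH : closure (ζ p) ⊆ {z | ε/2 < ∑ j, q j * z j} := by
      rw [(hval p).2.closure_eq]
      intro z hz
      have := isMinOn_iff.mp hmin z hz
      simp only [Set.mem_setOf_eq]
      linarith
    obtain ⟨U, hUopen, hpU, hU⟩ := hcfb _ ⟨q, ε/2, hqne, rfl⟩ hH
    refine ⟨U, hUopen, hpU, fun _ => {q}, ?_, ?_, ?_⟩
    · intro w'; exact ⟨⟨q, rfl⟩, convex_singleton _, isClosed_singleton⟩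
    · intro V hV
      by_cases h : q ∈ V
      · convert isOpen_univ
        ext e; simp [Set.singleton_subset_iff, h]
      · convert isOpen_empty
        ext e; simp [Set.singleton_subset_iff, h]
    · intro w' hw' x hx
      rw [Set.mem_singleton_iff] at hx; rw [hx]
      refine ⟨hqΔ, fun z hz => ?_⟩
      obtain ⟨y, hy, hyz⟩ := hU w' hw' z hz
      have hle : ∑ j, q j * y j ≤ ∑ j, q j * z j :=
        Finset.sum_le_sum fun j _ => mul_le_mul_of_nonneg_left (hyz j) (hqΔ.1 j)
      have hy' : ε/2 < ∑ j, q j * y j := hy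
      linarith
end

section
/- Let E = X = ℝ₊ with the usual topology, fix k > 0 and an integer n > 1, and for i = 1,…,n define F^i : E → 𝒫(X) by F^i(e) = {0, k} for e ≠ 1 and F^i(1) = {k/n}. Then each F^i has no closed local selection at the point 1 (so, by the equivalence of closed local selections with the NSP, F^i has no upper semi-continuous selection), whereas the aggregate correspondence F(e) = F^1(e) + ⋯ + F^n(e) (Minkowski sum) admits an upper semi-continuous selection, namely the constant correspondence ξ(e) = {k}. -/
open Set NNReal Topology Filter

/-- `(V, ψ)` is a local selection of `M` at `a`. -/
def LocalSelectionAt {E X : Type*} [TopologicalSpace E] (M : E → Set X) (a : E)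
    (V : Set E) (ψ : E → Set X) : Prop :=
  IsOpen V ∧ a ∈ V ∧ (∀ e ∈ V, ψ e ⊆ M e) ∧ ∀ e ∈ V, (M e).Nonempty → (ψ e).Nonempty

/-- A closed local selection: a local selection whose graph is closed in the subspace
`V × X`. -/
def ClosedLocalSelectionAt {E X : Type*} [TopologicalSpace E] [TopologicalSpace X]
    (M : E → Set X) (a : E) (V : Set E) (ψ : E → Set X) : Prop :=
  LocalSelectionAt M a V ψ ∧
    ∃ C : Set (E × X), IsClosed C ∧
      {p : E × X | p.1 ∈ V ∧ p.2 ∈ ψ p.1} = C ∩ (V ×ˢ (univ : Set X))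

/-- `ψ` is a selection of `M`. -/
def IsSelection {E X : Type*} (M ψ : E → Set X) : Prop :=
  (∀ e, ψ e ⊆ M e) ∧ ∀ e, (M e).Nonempty → (ψ e).Nonempty

/-- The individual correspondence `F^i(e) = {0, k}` for `e ≠ 1` and `F^i(1) = {k/n}` on
`E = X = ℝ₊`. -/
noncomputable def Findiv (k : ℝ≥0) (n : ℕ) : ℝ≥0 → Set ℝ≥0 :=
  fun e => if e = 1 then {k / (n : ℝ≥0)} else {0, k}

/-- The aggregate correspondence: the Minkowski sum of `n` copies of `F^i`. -/
noncomputable def Faggr (k : ℝ≥0) (n : ℕ) : ℝ≥0 → Set ℝ≥0 :=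
  fun e => {x | ∃ g : Fin n → ℝ≥0, (∀ j, g j ∈ Findiv k n e) ∧ x = ∑ j, g j}

lemma aux_ne_one (U : Set ℝ≥0) (hU : IsOpen U) (h1 : (1:ℝ≥0) ∈ U) :
    ∃ e ∈ U, e ≠ 1 := by
  have h : U ∈ 𝓝[>] (1:ℝ≥0) := nhdsWithin_le_nhds (hU.mem_nhds h1)
  obtain ⟨e, heU, he⟩ := Filter.nonempty_of_mem (Filter.inter_mem h self_mem_nhdsWithin)
  exact ⟨e, heU, ne_of_gt he⟩

/-- Example 3 (Khan–Uyanık), on aggregation of correspondences: each `F^i` has no closed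
local selection at `1` and no upper semi-continuous selection, whereas the aggregate
correspondence `F = F^1 + ⋯ + F^n` admits the upper semi-continuous selection
`ξ(e) = {k}`. -/
theorem aggregation_example (k : ℝ≥0) (hk : 0 < k) (n : ℕ) (hn : 1 < n) :
    (¬ ∃ (V : Set ℝ≥0) (ψ : ℝ≥0 → Set ℝ≥0),
        ClosedLocalSelectionAt (Findiv k n) 1 V ψ) ∧
    (¬ ∃ ψ : ℝ≥0 → Set ℝ≥0, IsSelection (Findiv k n) ψ ∧ USC ψ) ∧
    (IsSelection (Faggr k n) (fun _ => ({k} : Set ℝ≥0)) ∧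
      USC (fun _ : ℝ≥0 => ({k} : Set ℝ≥0))) := by
  have hn0 : (n : ℝ≥0) ≠ 0 := by exact_mod_cast (by omega : n ≠ 0)
  have hn1 : (1 : ℝ≥0) < (n : ℝ≥0) := by exact_mod_cast hn
  have hF1 : Findiv k n 1 = {k / (n : ℝ≥0)} := by simp [Findiv]
  have hFne : ∀ e, (Findiv k n e).Nonempty := by
    intro e
    by_cases he : e = 1 <;> simp [Findiv, he]
  have hkn0 : k / (n : ℝ≥0) ≠ 0 := div_ne_zero hk.ne' hn0
  have hknk : k / (n : ℝ≥0) ≠ k := ne_of_lt (div_lt_self hk hn1)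
  refine ⟨?_, ?_, ?_⟩
  · rintro ⟨V, ψ, ⟨hVo, h1V, hsub, hne⟩, C, hC, hgr⟩
    -- ψ 1 ⊆ {k/n}
    have hψ1 : ψ 1 ⊆ {k / (n : ℝ≥0)} := hF1 ▸ hsub 1 h1V
    set A : Set ℝ≥0 := {e | e ∈ V ∧ (e, (0:ℝ≥0)) ∈ C} with hA
    set B : Set ℝ≥0 := {e | e ∈ V ∧ (e, k) ∈ C} with hB
    have hcov : V \ {1} ⊆ A ∪ B := by
      rintro e ⟨heV, he1⟩
      obtain ⟨x, hx⟩ := hne e heV (hFne e)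
      have hxC : (e, x) ∈ C := by
        have : (e, x) ∈ C ∩ (V ×ˢ (univ : Set ℝ≥0)) := hgr ▸ (show e ∈ V ∧ x ∈ ψ e from ⟨heV, hx⟩)
        exact this.1
      have he1' : e ≠ 1 := he1
      have hx2 : x = 0 ∨ x = k := by
        have := hsub e heV hx
        simpa [Findiv, he1'] using this
      rcases hx2 with h0 | hk'
      · exact Or.inl ⟨heV, h0 ▸ hxC⟩
      · exact Or.inr ⟨heV, hk' ▸ hxC⟩
    have h1cl : (1:ℝ≥0) ∈ closure (V \ {1}) := by
      rw [mem_closure_iff]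
      intro O hO h1O
      obtain ⟨e, ⟨heO, heV⟩, he1⟩ := aux_ne_one (O ∩ V) (hO.inter hVo) ⟨h1O, h1V⟩
      exact ⟨e, heO, heV, he1⟩
    have : (1:ℝ≥0) ∈ closure A ∪ closure B := by
      rw [← closure_union]
      exact closure_mono hcov h1cl
    have key : ∀ x : ℝ≥0, (1:ℝ≥0) ∈ closure {e | e ∈ V ∧ (e, x) ∈ C} → x ∈ ψ 1 := by
      intro x h1x
      have hsubC : {e | e ∈ V ∧ (e, x) ∈ C} ×ˢ ({x} : Set ℝ≥0) ⊆ C := by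
        rintro ⟨e, y⟩ ⟨he, hy⟩
        rcases hy with rfl
        exact he.2
      have : ((1:ℝ≥0), x) ∈ closure C := by
        apply closure_mono hsubC
        rw [closure_prod_eq]
        exact ⟨h1x, subset_closure rfl⟩
      have hxC : ((1:ℝ≥0), x) ∈ C := hC.closure_eq ▸ this
      have : ((1:ℝ≥0), x) ∈ C ∩ (V ×ˢ (univ : Set ℝ≥0)) := ⟨hxC, h1V, trivial⟩
      have := hgr ▸ this
      exact this.2
    rcases this with hA1 | hB1
    · exact hkn0 (mem_singleton_iff.mp (hψ1 (key 0 hA1))).symm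
    · exact hknk (mem_singleton_iff.mp (hψ1 (key k hB1))).symm
  · rintro ⟨ψ, ⟨hsub, hne⟩, husc⟩
    have hU : IsOpen {e | ψ e ⊆ Ioo 0 k} := husc (Ioo 0 k) isOpen_Ioo
    have h1U : (1:ℝ≥0) ∈ {e | ψ e ⊆ Ioo 0 k} := by
      intro x hx
      have : x ∈ ({k / (n : ℝ≥0)} : Set ℝ≥0) := hF1 ▸ hsub 1 hx
      rcases this with rfl
      exact ⟨zero_lt_iff.mpr hkn0, div_lt_self hk hn1⟩
    obtain ⟨e, heU, he1⟩ := aux_ne_one _ hU h1U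
    obtain ⟨x, hx⟩ := hne e (hFne e)
    have hx2 : x ∈ ({0, k} : Set ℝ≥0) := by simpa [Findiv, he1] using hsub e hx
    have hx3 : x ∈ Ioo 0 k := heU hx
    rcases hx2 with h | h
    · rw [h] at hx3; exact absurd hx3.1 (lt_irrefl 0)
    · rw [h] at hx3; exact absurd hx3.2 (lt_irrefl k)
  · constructor
    · constructor
      · intro e x hx
        rw [mem_singleton_iff] at hx
        rw [hx]
        by_cases he : e = 1
        · refine ⟨fun _ => k / (n : ℝ≥0), fun j => by simp [Findiv, he], ?_⟩
          rw [Finset.sum_const, Finset.card_univ, Fintype.card_fin, nsmul_eq_mul,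
            mul_comm, div_mul_cancel₀ _ hn0]
        · refine ⟨fun j => if j = ⟨0, by omega⟩ then k else 0, fun j => ?_, ?_⟩
          · by_cases hj : j = ⟨0, by omega⟩ <;> simp [Findiv, he, hj]
          · rw [Finset.sum_ite_eq' Finset.univ (⟨0, by omega⟩ : Fin n) (fun _ => k)]
            simp
      · intro e _
        exact ⟨k, rfl⟩
    · intro V hV
      by_cases hkV : k ∈ V
      · have : {e : ℝ≥0 | ({k} : Set ℝ≥0) ⊆ V} = univ := by
          ext e; simp [singleton_subset_iff, hkV]
        rw [this]; exact isOpen_univ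
      · have : {e : ℝ≥0 | ({k} : Set ℝ≥0) ⊆ V} = ∅ := by
          ext e; simp [singleton_subset_iff, hkV]
        rw [this]; exact isOpen_empty
end
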